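/- The QEALM clause condition is preserved by Robinson's resolution rule: if clauses C_1 ∨ p(t_1,...,t_n) and C_2 ∨ ¬p(s_1,...,s_n) share no variables, both satisfy the QEALM clause condition, and σ is a most general unifier of p(t_1,...,t_n) and p(s_1,...,s_n), then the resolvent C_1σ ∨ C_2σ also satisfies the QEALM clause condition. -/
import Mathlib


/-- Terms over variables `V` and constant symbols `K`
(Bernays–Schönfinkel: the only function symbols are constants). -/
inductive Trm (V K : Type) : Type where
  | var : V → Trm V K
  | const : K → Trm V K
deriving DecidableEq

/-- A first-order literal (no equality): a polarity, a predicate symbol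
and a list of argument terms. -/
structure Lit (V K P : Type) : Type where
  pol : Bool
  pred : P
  args : List (Trm V K)
deriving DecidableEq

/-- A clause is a (finite) set of literals, read disjunctively. -/
abbrev Clause (V K P : Type) := Finset (Lit V K P)

/-- A CNF is a list of clauses, read conjunctively,
with all variables universally quantified. -/
abbrev CNF (V K P : Type) := List (Clause V K P)

variable {V K P : Type}

/-- The argument of a literal at the (1-based) position `i`. -/
def Lit.argAt (l : Lit V K P) : ℕ → Option (Trm V K)
  | 0 => none
  | i + 1 => l.args[i]?

/-- Variable `u` occurs at argument position `i` of the literal `l`. -/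
def Lit.varAt (l : Lit V K P) (u : V) (i : ℕ) : Prop := l.argAt i = some (Trm.var u)

/-- Variable `u` occurs in the literal `l`. -/
def Lit.hasVar (l : Lit V K P) (u : V) : Prop := ∃ i, l.varAt u i

/-- `i` is the least argument position at which `u` occurs in `l`. -/
def Lit.firstOccAt (l : Lit V K P) (u : V) (i : ℕ) : Prop :=
  l.varAt u i ∧ ∀ j, l.varAt u j → i ≤ j

/-- The QEALM clause condition: whenever a variable `u` occurs in several
literals of the clause, the least position at which it occurs is the same in
all these literals, and these literals agree on all argument positions up to
(and including) that one (a shared initial segment). -/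
def QEALMClause (C : Clause V K P) : Prop :=
  ∀ (u : V), ∀ l₁ ∈ C, ∀ l₂ ∈ C, l₁.hasVar u → l₂.hasVar u →
    ∃ i, l₁.firstOccAt u i ∧ l₂.firstOccAt u i ∧ ∀ j ≤ i, l₁.argAt j = l₂.argAt j

/-- A CNF is in the QEALM fragment iff every clause satisfies the QEALM clause condition. -/
def QEALM (φ : CNF V K P) : Prop := ∀ C ∈ φ, QEALMClause C

/-- A first-order structure for the signature `(K, P)` (no equality). -/
structure Model (K P : Type) : Type 1 where
  Dom : Type
  dne : Nonempty Dom
  constVal : K → Dom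
  predVal : P → List Dom → Prop

/-- Value of a term in a model under a variable assignment. -/
def Trm.val (M : Model K P) (ρ : V → M.Dom) : Trm V K → M.Dom
  | .var u => ρ u
  | .const c => M.constVal c

/-- Truth of a literal in a model under a variable assignment. -/
def Lit.holds (M : Model K P) (ρ : V → M.Dom) (l : Lit V K P) : Prop :=
  if l.pol then M.predVal l.pred (l.args.map (Trm.val M ρ))
  else ¬ M.predVal l.pred (l.args.map (Trm.val M ρ))

/-- Truth of a clause (a disjunction of literals). -/
def Clause.holds (M : Model K P) (ρ : V → M.Dom) (C : Clause V K P) : Prop :=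
  ∃ l ∈ C, l.holds M ρ

/-- First-order satisfiability (without equality) of a universally quantified CNF. -/
def CNF.Satisfiable (φ : CNF V K P) : Prop :=
  ∃ M : Model K P, ∀ ρ : V → M.Dom, ∀ C ∈ φ, C.holds M ρ

/-- Applying a substitution to a term. -/
def Trm.subst (σ : V → Trm V K) : Trm V K → Trm V K
  | .var u => σ u
  | .const c => .const c

/-- Applying a substitution to a literal. -/
def Lit.subst (σ : V → Trm V K) (l : Lit V K P) : Lit V K P :=
  ⟨l.pol, l.pred, l.args.map (Trm.subst σ)⟩

/-- Applying a substitution to a clause. -/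
def Clause.subst [DecidableEq V] [DecidableEq K] [DecidableEq P]
    (σ : V → Trm V K) (C : Clause V K P) : Clause V K P :=
  C.image (Lit.subst σ)

/-- Applying a substitution to a CNF. -/
def CNF.subst [DecidableEq V] [DecidableEq K] [DecidableEq P]
    (σ : V → Trm V K) (φ : CNF V K P) : CNF V K P :=
  φ.map (Clause.subst σ)

/-- An outer variable of a clause: a variable appearing in every literal of the clause. -/
def OuterVar (C : Clause V K P) (u : V) : Prop := ∀ l ∈ C, l.hasVar u

/-- `i` is the least position of an occurrence of `u` in any literal of `C`. -/
def LeastOccIn (C : Clause V K P) (u : V) (i : ℕ) : Prop :=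
  (∃ l ∈ C, l.varAt u i) ∧ ∀ j, (∃ l ∈ C, l.varAt u j) → i ≤ j

/-- `i` is an outer position of the clause `C`. -/
def OuterPosClause (C : Clause V K P) (i : ℕ) : Prop :=
  ∃ u : V, OuterVar C u ∧ LeastOccIn C u i

/-- `i` is a neutral position of the clause `C`: some term `t`, a constant or an
outer variable of `C`, occupies the `i`-th argument of every literal of `C`. -/
def NeutralPos (C : Clause V K P) (i : ℕ) : Prop :=
  ∃ t : Trm V K,
    ((∃ c, t = Trm.const c) ∨ (∃ u, t = Trm.var u ∧ OuterVar C u)) ∧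
    ∀ l ∈ C, l.argAt i = some t

/-- `i` is an outer position of the CNF `φ`: an outer position of some clause and a
neutral position of every clause. -/
def OuterPosCNF (φ : CNF V K P) (i : ℕ) : Prop :=
  (∃ C ∈ φ, OuterPosClause C i) ∧ ∀ D ∈ φ, NeutralPos D i

/-- Variable `u` occurs at argument position `i` in some literal of `φ`. -/
def VarOccursAt (φ : CNF V K P) (u : V) (i : ℕ) : Prop :=
  ∃ C ∈ φ, ∃ l ∈ C, l.varAt u i

/-- `σ` is the substitution that replaces every variable occurring at an argument
position `i` that is an outer position of `φ` by the constant `c i`, and leaves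
all other variables unchanged. -/
def IsOuterSubst (φ : CNF V K P) (c : ℕ → K) (σ : V → Trm V K) : Prop :=
  (∀ u i, OuterPosCNF φ i → VarOccursAt φ u i → σ u = Trm.const (c i)) ∧
  (∀ u, (¬ ∃ i, OuterPosCNF φ i ∧ VarOccursAt φ u i) → σ u = Trm.var u)

/-- A clause is inseparable if it is a single literal or some variable occurs in
every literal of the clause. -/
def InsepClause (C : Clause V K P) : Prop :=
  (∃ l, C = {l}) ∨ ∃ u : V, ∀ l ∈ C, l.hasVar u

/-- `Kc` is a component of a clause `C`: a non-empty inseparable subclause of `C`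
closed under sharing variables with literals of `C`. -/
def IsComponent (Kc C : Clause V K P) : Prop :=
  Kc.Nonempty ∧ Kc ⊆ C ∧ InsepClause Kc ∧
    ∀ a ∈ Kc, ∀ b ∈ C, (∃ u : V, a.hasVar u ∧ b.hasVar u) → b ∈ Kc

/-- All variables shared between `l₁` and `l₂` occur as arguments in positions `≤ m`. -/
def SharesUpTo (l₁ l₂ : Lit V K P) (m : ℕ) : Prop :=
  ∀ u : V, l₁.hasVar u → l₂.hasVar u →
    (∃ j ≤ m, l₁.varAt u j) ∧ (∃ j ≤ m, l₂.varAt u j)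

/-- `i` is a fork index of `φ`: for some clause `C` of `φ` and literals `l₁, l₂` of
`C` (not necessarily distinct), `i` is the minimal value such that every variable
shared between `l₁` and `l₂` occurs at some argument position `≤ i`.  In particular,
`0` is a fork index if some such pair shares no variables. -/
def ForkIndex (φ : CNF V K P) (i : ℕ) : Prop :=
  ∃ C ∈ φ, ∃ l₁ ∈ C, ∃ l₂ ∈ C, IsLeast {m | SharesUpTo l₁ l₂ m} i

/-- `σ` unifies the two argument lists `t` and `s` (i.e. the two atoms
`p(t₁,…,tₙ)` and `p(s₁,…,sₙ)`). -/
def Unifies (σ : V → Trm V K) (t s : List (Trm V K)) : Prop :=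
  t.map (Trm.subst σ) = s.map (Trm.subst σ)

/-- `σ` is a most general unifier of the atoms with argument lists `t` and `s`:
it unifies them, and every unifier factors through it. -/
def IsMGU (σ : V → Trm V K) (t s : List (Trm V K)) : Prop :=
  Unifies σ t s ∧
    ∀ τ : V → Trm V K, Unifies τ t s →
      ∃ δ : V → Trm V K, ∀ v, Trm.subst δ (σ v) = τ v

/-- The two clauses share no variables. -/
def VarDisjoint (C D : Clause V K P) : Prop :=
  ∀ u : V, (∃ l ∈ C, l.hasVar u) → ¬ ∃ l ∈ D, l.hasVar u

section Aux

lemma Lit.argAt_subst (σ : V → Trm V K) (l : Lit V K P) (j : ℕ) :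
    (l.subst σ).argAt j = (l.argAt j).map (Trm.subst σ) := by
  cases j with
  | zero => rfl
  | succ i => simp [Lit.argAt, Lit.subst]

lemma Lit.varAt_subst_iff {σ : V → Trm V K} {l : Lit V K P} {u : V} {j : ℕ} :
    (l.subst σ).varAt u j ↔ ∃ w, l.varAt w j ∧ σ w = Trm.var u := by
  unfold Lit.varAt
  rw [Lit.argAt_subst]
  constructor
  · intro h
    obtain ⟨x, hx, hxe⟩ := Option.map_eq_some_iff.1 h
    cases x with
    | var w => exact ⟨w, hx, by simpa [Trm.subst] using hxe⟩
    | const c => simp [Trm.subst] at hxe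
  · rintro ⟨w, hw, hs⟩
    rw [hw]
    simp [Trm.subst, hs]

lemma Lit.exists_firstOccAt {l : Lit V K P} {u : V}
    (h : l.hasVar u) : ∃ i, l.firstOccAt u i := by
  classical
  exact ⟨Nat.find h, Nat.find_spec h, fun j hj => Nat.find_min' h hj⟩

lemma Lit.argAt_congr {l l' : Lit V K P} (h : l.args = l'.args) (j : ℕ) :
    l.argAt j = l'.argAt j := by
  cases j <;> simp [Lit.argAt, h]

lemma Lit.firstOccAt_congr {l l' : Lit V K P} (h : l.args = l'.args) {u : V} {i : ℕ}
    (hf : l.firstOccAt u i) : l'.firstOccAt u i := by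
  have hv : ∀ j w, l.varAt w j ↔ l'.varAt w j := by
    intro j w; unfold Lit.varAt; rw [Lit.argAt_congr h]
  exact ⟨(hv i u).1 hf.1, fun j hj => hf.2 j ((hv j u).2 hj)⟩

lemma mem_iff_hasVar {pol : Bool} {q : P} {t : List (Trm V K)} {w : V} :
    Trm.var w ∈ t ↔ (⟨pol, q, t⟩ : Lit V K P).hasVar w := by
  rw [List.mem_iff_getElem?]
  constructor
  · rintro ⟨k, hk⟩; exact ⟨k + 1, hk⟩
  · rintro ⟨i, hi⟩
    cases i with
    | zero => exact absurd hi (by simp [Lit.varAt, Lit.argAt])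
    | succ k => exact ⟨k, hi⟩

/-- If `σ w = var u = σ w'` for an mgu `σ` and `w` occurs in neither `t` nor `s`,
then `w = w'`. -/
lemma class_singleton [DecidableEq V] {σ : V → Trm V K} {t s : List (Trm V K)}
    (hmgu : IsMGU σ t s) {u w w' : V}
    (hw : σ w = Trm.var u) (hw' : σ w' = Trm.var u)
    (hnt : Trm.var w ∉ t) (hns : Trm.var w ∉ s) : w = w' := by
  by_contra hne
  have upd_unif : ∀ z : Trm V K, Unifies (Function.update σ w z) t s := by
    intro z
    have h1 := hmgu.1
    unfold Unifies at h1 ⊢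
    have key : ∀ L : List (Trm V K), Trm.var w ∉ L →
        L.map (Trm.subst (Function.update σ w z)) = L.map (Trm.subst σ) := by
      intro L hL
      apply List.map_congr_left
      intro x hx
      cases x with
      | const c => rfl
      | var v =>
        have hv : v ≠ w := fun h => hL (h ▸ hx)
        simp [Trm.subst, Function.update_of_ne hv]
    rw [key t hnt, key s hns, h1]
  have factor : ∀ z : Trm V K, ∃ δ : V → Trm V K,
      Trm.subst δ (Trm.var u) = z ∧ Trm.subst δ (Trm.var u) = Trm.var u := by
    intro z
    obtain ⟨δ, hδ⟩ := hmgu.2 _ (upd_unif z)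
    refine ⟨δ, ?_, ?_⟩
    · have := hδ w; rwa [hw, Function.update_self] at this
    · have := hδ w'; rwa [hw', Function.update_of_ne (Ne.symm hne), hw'] at this
  obtain ⟨δ₁, h₁, h₁'⟩ := factor (Trm.var w)
  obtain ⟨δ₂, h₂, h₂'⟩ := factor (Trm.var w')
  have e₁ : Trm.var (K := K) w = Trm.var u := h₁.symm.trans h₁'
  have e₂ : Trm.var (K := K) w' = Trm.var u := h₂.symm.trans h₂'
  injection e₁ with hwu
  injection e₂ with hwu'
  exact hne (hwu.trans hwu'.symm)

/-- The key per-side lemma: if `l ∈ C`, the clause `insert e C` satisfies the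
QEALM condition, every `σ`-preimage of `var u` occurring in `l` also occurs in
`e`, and `m` is the first occurrence of `u` in `eσ`, then `m` is the first
occurrence of `u` in `lσ` and `lσ`, `eσ` agree up to `m`. -/
lemma side_lemma [DecidableEq V] [DecidableEq K] [DecidableEq P]
    {C : Clause V K P} {e : Lit V K P} (hq : QEALMClause (insert e C))
    {σ : V → Trm V K} {u : V} {m : ℕ}
    (hm : (e.subst σ).firstOccAt u m)
    {l : Lit V K P} (hl : l ∈ C)
    (hweak : ∀ w, σ w = Trm.var u → l.hasVar w → e.hasVar w)
    (hlu : (l.subst σ).hasVar u) :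
    (l.subst σ).firstOccAt u m ∧ ∀ j ≤ m, (l.subst σ).argAt j = (e.subst σ).argAt j := by
  have hl' : l ∈ insert e C := Finset.mem_insert_of_mem hl
  have he' : e ∈ insert e C := Finset.mem_insert_self e C
  have key : ∀ w j, σ w = Trm.var u → l.varAt w j →
      ∃ i, l.firstOccAt w i ∧ e.firstOccAt w i ∧ (∀ k ≤ i, l.argAt k = e.argAt k) ∧ m ≤ i := by
    intro w j hsw hlj
    have hlw : l.hasVar w := ⟨j, hlj⟩
    obtain ⟨i, hli, hei, hseg⟩ := hq w l hl' e he' hlw (hweak w hsw hlw)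
    have hmi : m ≤ i := hm.2 i (Lit.varAt_subst_iff.2 ⟨w, hei.1, hsw⟩)
    exact ⟨i, hli, hei, hseg, hmi⟩
  obtain ⟨j₀, hj₀⟩ := hlu
  obtain ⟨w₀, hw₀j, hw₀σ⟩ := Lit.varAt_subst_iff.1 hj₀
  obtain ⟨i₀, _, _, hseg₀, hmi₀⟩ := key w₀ j₀ hw₀σ hw₀j
  have hsegm : ∀ k ≤ m, l.argAt k = e.argAt k := fun k hk => hseg₀ k (hk.trans hmi₀)
  obtain ⟨wm, hwm, hwmσ⟩ := Lit.varAt_subst_iff.1 hm.1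
  have hlm : l.varAt wm m := by
    unfold Lit.varAt at hwm ⊢
    rw [hsegm m le_rfl]
    exact hwm
  refine ⟨⟨Lit.varAt_subst_iff.2 ⟨wm, hlm, hwmσ⟩, ?_⟩, ?_⟩
  · intro j hj
    obtain ⟨w, hwj, hwσ⟩ := Lit.varAt_subst_iff.1 hj
    obtain ⟨i, hli, _, _, hmi⟩ := key w j hwσ hwj
    exact hmi.trans (hli.2 j hwj)
  · intro j hj
    rw [Lit.argAt_subst, Lit.argAt_subst, hsegm j hj]

end Aux

/-- Robinson's resolution rule preserves the QEALM clause
condition: if the clauses `C₁ ∨ p(t₁,…,tₙ)` and `C₂ ∨ ¬p(s₁,…,sₙ)` share no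
variables, both satisfy the QEALM clause condition, and `σ` is a most general
unifier of `p(t₁,…,tₙ)` and `p(s₁,…,sₙ)`, then the resolvent `C₁σ ∨ C₂σ` also
satisfies the QEALM clause condition. -/
theorem statement_8 [DecidableEq V] [DecidableEq K] [DecidableEq P]
    (C₁ C₂ : Clause V K P) (p : P) (t s : List (Trm V K)) (σ : V → Trm V K)
    (hlen : t.length = s.length)
    (hdisj : VarDisjoint (insert ⟨true, p, t⟩ C₁) (insert ⟨false, p, s⟩ C₂))
    (hq₁ : QEALMClause (insert (⟨true, p, t⟩ : Lit V K P) C₁))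
    (hq₂ : QEALMClause (insert (⟨false, p, s⟩ : Lit V K P) C₂))
    (hmgu : IsMGU σ t s) :
    QEALMClause (Clause.subst σ C₁ ∪ Clause.subst σ C₂) := by
  classical
  set a : Lit V K P := ⟨true, p, t⟩ with ha
  set b : Lit V K P := ⟨false, p, s⟩ with hb
  have hargs : (a.subst σ).args = (b.subst σ).args := hmgu.1
  have memT : ∀ {w : V}, Trm.var w ∈ t ↔ a.hasVar w := fun {w} => mem_iff_hasVar
  have memS : ∀ {w : V}, Trm.var w ∈ s ↔ b.hasVar w := fun {w} => mem_iff_hasVar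
  intro u l₁' h₁ l₂' h₂ hv₁ hv₂
  have unpack : ∀ l' ∈ Clause.subst σ C₁ ∪ Clause.subst σ C₂,
      ∃ l, (l ∈ C₁ ∨ l ∈ C₂) ∧ l' = l.subst σ := by
    intro l' hl'
    rcases Finset.mem_union.1 hl' with h | h
    · obtain ⟨l, hl, hle⟩ := Finset.mem_image.1 h
      exact ⟨l, Or.inl hl, hle.symm⟩
    · obtain ⟨l, hl, hle⟩ := Finset.mem_image.1 h
      exact ⟨l, Or.inr hl, hle.symm⟩
  obtain ⟨l₁, hside₁, rfl⟩ := unpack _ h₁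
  obtain ⟨l₂, hside₂, rfl⟩ := unpack _ h₂
  by_cases hcase : ∃ w, Trm.var w ∈ t ∧ σ w = Trm.var u
  · -- Case II: `u` occurs in the unified atom.
    obtain ⟨w₁, hw₁t, hw₁σ⟩ := hcase
    have haσ : (a.subst σ).hasVar u := by
      obtain ⟨i, hi⟩ := memT.1 hw₁t
      exact ⟨i, Lit.varAt_subst_iff.2 ⟨w₁, hi, hw₁σ⟩⟩
    obtain ⟨m, hm⟩ := Lit.exists_firstOccAt haσ
    have hmb : (b.subst σ).firstOccAt u m := Lit.firstOccAt_congr hargs hm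
    have hweakA : ∀ l ∈ C₁, ∀ w, σ w = Trm.var u → l.hasVar w → a.hasVar w := by
      intro l hl w hσ hlw
      by_cases hwt : Trm.var w ∈ t
      · exact memT.1 hwt
      by_cases hws : Trm.var w ∈ s
      · exact absurd ⟨b, Finset.mem_insert_self _ _, memS.1 hws⟩
          (hdisj w ⟨l, Finset.mem_insert_of_mem hl, hlw⟩)
      · have hww : w = w₁ := class_singleton hmgu hσ hw₁σ hwt hws
        exact absurd (by rw [hww]; exact hw₁t) hwt
    have hweakB : ∀ l ∈ C₂, ∀ w, σ w = Trm.var u → l.hasVar w → b.hasVar w := by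
      intro l hl w hσ hlw
      by_cases hws : Trm.var w ∈ s
      · exact memS.1 hws
      by_cases hwt : Trm.var w ∈ t
      · exact absurd ⟨l, Finset.mem_insert_of_mem hl, hlw⟩
          (hdisj w ⟨a, Finset.mem_insert_self _ _, memT.1 hwt⟩)
      · have hww : w = w₁ := class_singleton hmgu hσ hw₁σ hwt hws
        exact absurd (by rw [hww]; exact hw₁t) hwt
    have get : ∀ l, (l ∈ C₁ ∨ l ∈ C₂) → (l.subst σ).hasVar u →
        (l.subst σ).firstOccAt u m ∧
          ∀ j ≤ m, (l.subst σ).argAt j = (a.subst σ).argAt j := by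
      rintro l (hl | hl) hlu
      · exact side_lemma hq₁ hm hl (hweakA l hl) hlu
      · obtain ⟨h1', h2'⟩ := side_lemma hq₂ hmb hl (hweakB l hl) hlu
        exact ⟨h1', fun j hj => (h2' j hj).trans (Lit.argAt_congr hargs.symm j)⟩
    obtain ⟨g₁, g₁'⟩ := get l₁ hside₁ hv₁
    obtain ⟨g₂, g₂'⟩ := get l₂ hside₂ hv₂
    exact ⟨m, g₁, g₂, fun j hj => (g₁' j hj).trans (g₂' j hj).symm⟩
  · -- Case I: `u` does not occur in the unified atom.
    push_neg at hcase
    have hcaseS : ∀ w, Trm.var w ∈ s → σ w ≠ Trm.var u := by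
      intro w hws hσ
      have h1 : Trm.var u ∈ s.map (Trm.subst σ) :=
        List.mem_map.2 ⟨_, hws, by simp [Trm.subst, hσ]⟩
      have heq : t.map (Trm.subst σ) = s.map (Trm.subst σ) := hmgu.1
      rw [← heq] at h1
      obtain ⟨x, hxt, hx⟩ := List.mem_map.1 h1
      cases x with
      | const c => simp [Trm.subst] at hx
      | var w' => exact hcase w' hxt (by simpa [Trm.subst] using hx)
    obtain ⟨j₁, hj₁⟩ := hv₁
    obtain ⟨w₁, hw₁, hσ₁⟩ := Lit.varAt_subst_iff.1 hj₁
    obtain ⟨j₂, hj₂⟩ := hv₂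
    obtain ⟨w₂, hw₂, hσ₂⟩ := Lit.varAt_subst_iff.1 hj₂
    have hnt₁ : Trm.var w₁ ∉ t := fun h => hcase w₁ h hσ₁
    have hns₁ : Trm.var w₁ ∉ s := fun h => hcaseS w₁ h hσ₁
    have h12 : w₁ = w₂ := class_singleton hmgu hσ₁ hσ₂ hnt₁ hns₁
    have hl₂v : l₂.hasVar w₁ := ⟨j₂, by rw [h12]; exact hw₂⟩
    have hl₁v : l₁.hasVar w₁ := ⟨j₁, hw₁⟩
    have same : (l₁ ∈ C₁ ∧ l₂ ∈ C₁) ∨ (l₁ ∈ C₂ ∧ l₂ ∈ C₂) := by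
      rcases hside₁ with h1 | h1 <;> rcases hside₂ with h2 | h2
      · exact Or.inl ⟨h1, h2⟩
      · exact absurd ⟨l₂, Finset.mem_insert_of_mem h2, hl₂v⟩
          (hdisj w₁ ⟨l₁, Finset.mem_insert_of_mem h1, hl₁v⟩)
      · exact absurd ⟨l₁, Finset.mem_insert_of_mem h1, hl₁v⟩
          (hdisj w₁ ⟨l₂, Finset.mem_insert_of_mem h2, hl₂v⟩)
      · exact Or.inr ⟨h1, h2⟩
    have hmain : ∃ i, l₁.firstOccAt w₁ i ∧ l₂.firstOccAt w₁ i ∧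
        ∀ j ≤ i, l₁.argAt j = l₂.argAt j := by
      rcases same with ⟨h1, h2⟩ | ⟨h1, h2⟩
      · exact hq₁ w₁ l₁ (Finset.mem_insert_of_mem h1) l₂ (Finset.mem_insert_of_mem h2) hl₁v hl₂v
      · exact hq₂ w₁ l₁ (Finset.mem_insert_of_mem h1) l₂ (Finset.mem_insert_of_mem h2) hl₁v hl₂v
    obtain ⟨i, hfi₁, hfi₂, hseg⟩ := hmain
    have min₁ : ∀ (l : Lit V K P), l.firstOccAt w₁ i → ∀ j, (l.subst σ).varAt u j → i ≤ j := by
      intro l hf j hj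
      obtain ⟨w, hwj, hwσ⟩ := Lit.varAt_subst_iff.1 hj
      have hnt : Trm.var w ∉ t := fun h => hcase w h hwσ
      have hns : Trm.var w ∉ s := fun h => hcaseS w h hwσ
      have : w = w₁ := class_singleton hmgu hwσ hσ₁ hnt hns
      exact hf.2 j (by rw [← this]; exact hwj)
    refine ⟨i, ⟨Lit.varAt_subst_iff.2 ⟨w₁, hfi₁.1, hσ₁⟩, min₁ l₁ hfi₁⟩,
      ⟨Lit.varAt_subst_iff.2 ⟨w₁, hfi₂.1, hσ₁⟩, min₁ l₂ hfi₂⟩, ?_⟩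
    intro j hj
    rw [Lit.argAt_subst, Lit.argAt_subst, hseg j hj]
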